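/- arXiv:2006.14921 — 2 statements merged into one kernel-verified Lean document; each statement's English description precedes it below -/
import Mathlib

section
/- The Fejer map φ_M(x) = x − (1/h)Σᵢ ρᵢ⁺(x) is M-Fejerian: for every x ∉ M and every y ∈ M, ‖φ_M(x) − y‖ < ‖x − y‖. -/
/-!
`x - ρᵢ⁺(x)` is the projection of `x` onto the half-space `⟪aᵢ, ·⟫ ≤ bᵢ`, so every feasible `y`
satisfies `‖ρᵢ⁺(x)‖² ≤ ⟪ρᵢ⁺(x), x - y⟫`. Averaging `h` such steps, Cauchy–Schwarz gives
`‖Σᵢ ρᵢ⁺(x)‖² ≤ h · Σᵢ ‖ρᵢ⁺(x)‖²`, and expanding the square yields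
`‖φ_M(x) - y‖² ≤ ‖x - y‖² - (1/h) Σᵢ ‖ρᵢ⁺(x)‖²`, which is strict as soon as `x` violates a constraint.
-/

open scoped RealInnerProductSpace
open Classical

open Finset

section HalfspaceCorrection

variable {E : Type*} [NormedAddCommGroup E] [InnerProductSpace ℝ E]

noncomputable def halfspaceCorrection (a : E) (β : ℝ) (x : E) : E :=
  (max (⟪a, x⟫ - β) 0 / ‖a‖ ^ 2) • a

theorem halfspaceCorrection_ne_zero {a : E} {β : ℝ} {x : E} (ha : a ≠ 0) (hx : β < ⟪a, x⟫) :
    halfspaceCorrection a β x ≠ 0 := by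
  rw [halfspaceCorrection, max_eq_left (by linarith)]
  exact smul_ne_zero (div_pos (by linarith) (by positivity)).ne' ha

theorem norm_sq_halfspaceCorrection_le_inner {a : E} {β : ℝ} {x y : E} (hy : ⟪a, y⟫ ≤ β) :
    ‖halfspaceCorrection a β x‖ ^ 2 ≤ ⟪halfspaceCorrection a β x, x - y⟫ := by
  rcases le_or_gt ⟪a, x⟫ β with hx | hx
  · simp [halfspaceCorrection, max_eq_right (sub_nonpos.2 hx)]
  rcases eq_or_ne a 0 with rfl | ha
  · simp [halfspaceCorrection]
  set c := (⟪a, x⟫ - β) / ‖a‖ ^ 2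
  have hc : 0 < c := div_pos (by linarith) (by positivity)
  have hca : c * ‖a‖ ^ 2 = ⟪a, x⟫ - β := div_mul_cancel₀ _ (by positivity)
  calc ‖halfspaceCorrection a β x‖ ^ 2 = c * (c * ‖a‖ ^ 2) := by
        rw [halfspaceCorrection, max_eq_left (by linarith), norm_smul, mul_pow,
          Real.norm_eq_abs, sq_abs]
        ring
    _ ≤ c * (⟪a, x⟫ - ⟪a, y⟫) := by rw [hca]; gcongr
    _ = ⟪halfspaceCorrection a β x, x - y⟫ := by
        rw [halfspaceCorrection, max_eq_left (by linarith), real_inner_smul_left, inner_sub_right]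

end HalfspaceCorrection

theorem norm_sub_inv_card_smul_sum_lt {E ι : Type*} [NormedAddCommGroup E] [InnerProductSpace ℝ E]
    {s : Finset ι} {v : ι → E} {z : E} (hv : ∀ i ∈ s, ‖v i‖ ^ 2 ≤ ⟪v i, z⟫)
    (hne : ∃ i ∈ s, v i ≠ 0) :
    ‖z - (#s : ℝ)⁻¹ • ∑ i ∈ s, v i‖ < ‖z‖ := by
  obtain ⟨i₀, hi₀, hvi₀⟩ := hne
  set k : ℝ := (#s : ℝ)
  set T := ∑ i ∈ s, ‖v i‖ ^ 2
  have hk : 0 < k := Nat.cast_pos.2 (card_pos.2 ⟨i₀, hi₀⟩)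
  have hT : 0 < T := sum_pos' (fun i _ => by positivity) ⟨i₀, hi₀, by positivity⟩
  have hinner : T ≤ ⟪∑ i ∈ s, v i, z⟫ := by
    rw [sum_inner]
    exact sum_le_sum hv
  have hnorm : ‖∑ i ∈ s, v i‖ ^ 2 ≤ k * T :=
    calc ‖∑ i ∈ s, v i‖ ^ 2 ≤ (∑ i ∈ s, ‖v i‖) ^ 2 := by gcongr; exact norm_sum_le _ _
      _ ≤ k * T := sq_sum_le_card_mul_sum_sq
  have hsq : ‖z - k⁻¹ • ∑ i ∈ s, v i‖ ^ 2 < ‖z‖ ^ 2 := by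
    rw [norm_sub_sq_real, real_inner_smul_right, norm_smul, mul_pow, Real.norm_eq_abs,
      abs_of_pos (inv_pos.2 hk), real_inner_comm]
    have hquad : k⁻¹ ^ 2 * ‖∑ i ∈ s, v i‖ ^ 2 ≤ k⁻¹ * T := by
      calc k⁻¹ ^ 2 * ‖∑ i ∈ s, v i‖ ^ 2 ≤ k⁻¹ ^ 2 * (k * T) := by gcongr
        _ = k⁻¹ * T := by field_simp
    have hlin : k⁻¹ * T ≤ k⁻¹ * ⟪∑ i ∈ s, v i, z⟫ := by gcongr
    have hpos : 0 < k⁻¹ * T := by positivity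
    linarith
  exact lt_of_pow_lt_pow_left₀ 2 (norm_nonneg _) hsq

theorem stmt4_general {n m : ℕ} (a : Fin m → EuclideanSpace ℝ (Fin n))
    (ha : ∀ i, a i ≠ 0) (b : Fin m → ℝ)
    (M : Set (EuclideanSpace ℝ (Fin n)))
    (hM : M = {x | ∀ i, ⟪a i, x⟫ ≤ b i})
    (ρ : Fin m → EuclideanSpace ℝ (Fin n) → EuclideanSpace ℝ (Fin n))
    (hρ : ∀ i x, ρ i x = (max (⟪a i, x⟫ - b i) 0 / ‖a i‖ ^ 2) • a i)
    (h : EuclideanSpace ℝ (Fin n) → ℕ)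
    (hh : ∀ x, h x = (Finset.univ.filter fun i => ρ i x ≠ 0).card)
    (φ : EuclideanSpace ℝ (Fin n) → EuclideanSpace ℝ (Fin n))
    (hφ : ∀ x, φ x = if h x = 0 then x else x - ((h x : ℝ))⁻¹ • ∑ i, ρ i x) :
    ∀ x ∉ M, ∀ y ∈ M, ‖φ x - y‖ < ‖x - y‖ := by
  intro x hx y hy
  subst hM
  obtain ⟨i₀, hi₀⟩ : ∃ i, b i < ⟪a i, x⟫ := by simpa using hx
  set S := univ.filter fun i => ρ i x ≠ 0
  have hi₀S : i₀ ∈ S :=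
    mem_filter.2 ⟨mem_univ _, by rw [hρ]; exact halfspaceCorrection_ne_zero (ha i₀) hi₀⟩
  have hφx : φ x - y = (x - y) - (#S : ℝ)⁻¹ • ∑ i ∈ S, ρ i x := by
    rw [hφ, hh, if_neg (card_ne_zero_of_mem hi₀S), sum_filter_ne_zero]
    abel
  rw [hφx]
  refine norm_sub_inv_card_smul_sum_lt (fun i _ => ?_) ⟨i₀, hi₀S, (mem_filter.1 hi₀S).2⟩
  rw [hρ]
  exact norm_sq_halfspaceCorrection_le_inner (hy i)

/-- The Fejer map `φ_M x = x - (1/h) • Σᵢ ρᵢ⁺ x` is `M`-Fejerian: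
for every `x ∉ M` and every `y ∈ M`, `‖φ_M x - y‖ < ‖x - y‖`. -/
theorem stmt4 {n m : ℕ} (a : Fin m → EuclideanSpace ℝ (Fin n))
    (ha : ∀ i, a i ≠ 0) (b : Fin m → ℝ)
    (M : Set (EuclideanSpace ℝ (Fin n)))
    (hM : M = {x | ∀ i, ⟪a i, x⟫ ≤ b i}) (hne : M.Nonempty)
    (ρ : Fin m → EuclideanSpace ℝ (Fin n) → EuclideanSpace ℝ (Fin n))
    (hρ : ∀ i x, ρ i x = (max (⟪a i, x⟫ - b i) 0 / ‖a i‖ ^ 2) • a i)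
    (h : EuclideanSpace ℝ (Fin n) → ℕ)
    (hh : ∀ x, h x = (Finset.univ.filter fun i => ρ i x ≠ 0).card)
    (φ : EuclideanSpace ℝ (Fin n) → EuclideanSpace ℝ (Fin n))
    (hφ : ∀ x, φ x = if h x = 0 then x else x - ((h x : ℝ))⁻¹ • ∑ i, ρ i x) :
    ∀ x ∉ M, ∀ y ∈ M, ‖φ x - y‖ < ‖x - y‖ :=
  stmt4_general a ha b M hM ρ hρ h hh φ hφ
end

section
/- The exact solution of the LP problem maximizing ⟨c,x⟩ subject to the constraints xᵢ ≤ 200 for all i, Σᵢ xᵢ ≤ 200(n−1) + 100, Σᵢ xᵢ ≥ 100 and xᵢ ≥ 0, with c = (10n, 10(n−1), …, 10), is the point x̄ = (200, 200, …, 200, 100) for any n ≥ 2. -/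
/-!
Write `d = x̄ - x` and split the objective as `⟪c, d⟫ = 10 · Σ dᵢ + Σ (cᵢ - 10) dᵢ`. The first
term is nonnegative because `x̄` exhausts the budget `Σ xᵢ ≤ 200(n-1) + 100`; in the second, the
last coefficient vanishes and every other term is a positive weight times `200 - xᵢ ≥ 0`. At a
maximizer both terms vanish, which forces `xᵢ = 200` for `i < n - 1` and then `Σ xᵢ = Σ x̄ᵢ`
pins down the last coordinate.
-/

open scoped RealInnerProductSpace

section VertexOptimality

variable {ι : Type*} {c x y : ι → ℝ} {μ u : ℝ} {j : ι}

theorem mul_sub_nonneg_of_forall_ne (hcj : c j = μ) (hc : ∀ i ≠ j, μ ≤ c i)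
    (hy : ∀ i ≠ j, y i = u) (hx : ∀ i ≠ j, x i ≤ u) (i : ι) :
    0 ≤ (c i - μ) * (y i - x i) := by
  by_cases hi : i = j
  · simp [hi, hcj]
  · exact mul_nonneg (sub_nonneg.mpr (hc i hi)) (by linarith [hy i hi, hx i hi])

variable [Fintype ι]

theorem dotProduct_eq_mul_sum_add (c d : ι → ℝ) (μ : ℝ) :
    c ⬝ᵥ d = μ * ∑ i, d i + ∑ i, (c i - μ) * d i := by
  rw [dotProduct, Finset.mul_sum, ← Finset.sum_add_distrib]
  exact Finset.sum_congr rfl fun i _ => by ring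

theorem dotProduct_le_dotProduct_of_forall_ne (hμ : 0 ≤ μ) (hcj : c j = μ)
    (hc : ∀ i ≠ j, μ ≤ c i) (hy : ∀ i ≠ j, y i = u) (hx : ∀ i ≠ j, x i ≤ u)
    (hsum : ∑ i, x i ≤ ∑ i, y i) : c ⬝ᵥ x ≤ c ⬝ᵥ y := by
  have hterm := mul_sub_nonneg_of_forall_ne hcj hc hy hx
  have hsplit := dotProduct_eq_mul_sum_add c (y - x) μ
  simp only [dotProduct_sub, Pi.sub_apply, Finset.sum_sub_distrib] at hsplit
  nlinarith [Finset.sum_nonneg fun i (_ : i ∈ Finset.univ) => hterm i]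

theorem eq_of_dotProduct_eq_of_forall_ne (hμ : 0 < μ) (hcj : c j = μ)
    (hc : ∀ i ≠ j, μ < c i) (hy : ∀ i ≠ j, y i = u) (hx : ∀ i ≠ j, x i ≤ u)
    (hsum : ∑ i, x i ≤ ∑ i, y i) (h : c ⬝ᵥ x = c ⬝ᵥ y) : x = y := by
  have hterm := mul_sub_nonneg_of_forall_ne hcj (fun i hi => (hc i hi).le) hy hx
  have hsplit := dotProduct_eq_mul_sum_add c (y - x) μ
  simp only [dotProduct_sub, h, sub_self, Pi.sub_apply] at hsplit
  obtain ⟨hsum_eq, hterms⟩ := (add_eq_zero_iff_of_nonneg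
    (mul_nonneg hμ.le (by simpa [Finset.sum_sub_distrib] using hsum))
    (Finset.sum_nonneg fun i _ => hterm i)).mp hsplit.symm
  have hoff : ∀ i ≠ j, y i - x i = 0 := fun i hi =>
    (mul_eq_zero.mp (congrFun ((Fintype.sum_eq_zero_iff_of_nonneg hterm).mp hterms) i)).resolve_left
      (sub_ne_zero.mpr (hc i hi).ne')
  have hj : y j - x j = 0 := by
    rwa [mul_eq_zero, or_iff_right hμ.ne',
      Finset.sum_eq_single j (fun i _ hi => hoff i hi) (by simp)] at hsum_eq
  funext i
  by_cases hi : i = j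
  · subst hi; linarith
  · linarith [hoff i hi]

theorem real_inner_eq_ofLp_dotProduct (x y : EuclideanSpace ℝ ι) :
    ⟪x, y⟫ = x.ofLp ⬝ᵥ y.ofLp := by
  rw [EuclideanSpace.inner_eq_star_dotProduct, dotProduct_comm]
  rfl

end VertexOptimality

theorem Fin.sum_eq_nsmul_add_last {M : Type*} [AddCommMonoid M] {m : ℕ} {y : Fin (m + 1) → M}
    {u : M} (hy : ∀ i ≠ Fin.last m, y i = u) : ∑ i, y i = m • u + y (Fin.last m) := by
  rw [Fin.sum_univ_castSucc, Finset.sum_congr rfl fun i _ => hy _ (Fin.castSucc_ne_last i)]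
  simp

theorem lt_mul_natCast_sub_val {m : ℕ} {i : Fin (m + 1)} (hi : i ≠ Fin.last m) {a : ℝ}
    (ha : 0 < a) : a < a * (((m + 1 : ℕ) : ℝ) - i) := by
  have : ((i : ℕ) : ℝ) < m := by exact_mod_cast Fin.val_lt_last hi
  push_cast
  nlinarith

/-- The LP problem `max ⟪c,x⟫` subject to `0 ≤ xᵢ ≤ 200`,
`100 ≤ Σ xᵢ ≤ 200(n-1)+100`, with `cᵢ = 10(n-i)`, has the unique solution
`x̄ = (200, …, 200, 100)` for any `n ≥ 2`. -/
theorem stmt12 {n : ℕ} (hn : 2 ≤ n)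
    (c : EuclideanSpace ℝ (Fin n)) (hc : ∀ i, c i = 10 * ((n : ℝ) - i))
    (M : Set (EuclideanSpace ℝ (Fin n)))
    (hM : M = {x | (∀ i, 0 ≤ x i ∧ x i ≤ 200) ∧
      100 ≤ ∑ i, x i ∧ ∑ i, x i ≤ 200 * ((n : ℝ) - 1) + 100})
    (xbar : EuclideanSpace ℝ (Fin n))
    (hxbar : ∀ i : Fin n, xbar i = if (i : ℕ) < n - 1 then 200 else 100) :
    xbar ∈ M ∧ (∀ x ∈ M, ⟪c, x⟫ ≤ ⟪c, xbar⟫) ∧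
      ∀ x ∈ M, ⟪c, x⟫ = ⟪c, xbar⟫ → x = xbar := by
  obtain ⟨m, rfl⟩ : ∃ m, n = m + 1 := ⟨n - 1, by omega⟩
  subst hM
  have hc_last : c (Fin.last m) = 10 := by simp [hc]
  have hc_ne (i) (hi : i ≠ Fin.last m) : 10 < c i :=
    hc i ▸ lt_mul_natCast_sub_val hi (by norm_num)
  have hxbar_ne (i) (hi : i ≠ Fin.last m) : xbar i = 200 := by simp [hxbar, Fin.val_lt_last hi]
  have hxbar_last : xbar (Fin.last m) = 100 := by simp [hxbar]
  have hsum : ∑ i, xbar i = 200 * m + 100 := by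
    rw [Fin.sum_eq_nsmul_add_last hxbar_ne, hxbar_last, nsmul_eq_mul, mul_comm]
  simp only [real_inner_eq_ofLp_dotProduct]
  refine ⟨⟨fun i => ?_, ?_, ?_⟩, fun x ⟨hx, _, hx_sum⟩ => ?_, fun x ⟨hx, _, hx_sum⟩ h => ?_⟩
  · by_cases hi : i = Fin.last m
    · rw [hi, hxbar_last]; norm_num
    · rw [hxbar_ne i hi]; norm_num
  · rw [hsum]; linarith [(m.cast_nonneg : (0 : ℝ) ≤ m)]
  · rw [hsum]; push_cast; linarith
  · push_cast at hx_sum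
    exact dotProduct_le_dotProduct_of_forall_ne (by norm_num) hc_last
      (fun i hi => (hc_ne i hi).le) hxbar_ne (fun i _ => (hx i).2) (by linarith)
  · push_cast at hx_sum
    exact WithLp.ofLp_injective 2 (eq_of_dotProduct_eq_of_forall_ne (by norm_num) hc_last
      hc_ne hxbar_ne (fun i _ => (hx i).2) (by linarith) h)
end
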